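/- Let w ∈ ℝ³ with |w| = 4/3 and define u : ℝ³ → ℝ³ by u(x) = 3(1+|x|²)^{-2}((1-|x|²)w + 2(w·x)x + 2 w×x). Then u satisfies the critical 3/2-curl-curl equation ∇×(|∇×u|^{-1/2} ∇×u) = |u| u on ℝ³. -/

import Mathlib

noncomputable section
open MeasureTheory Real
open scoped BigOperators

/-- `ℝ³` with the Euclidean norm. -/
abbrev E3 : Type := EuclideanSpace ℝ (Fin 3)

/-- Build a vector of `E3` from components. -/
def toE3 (f : Fin 3 → ℝ) : E3 := (WithLp.equiv 2 (Fin 3 → ℝ)).symm f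

/-- Euclidean inner product on `ℝ³`. -/
def ip (a b : E3) : ℝ := @inner ℝ _ _ a b

/-- `i`-th partial derivative of a scalar function on `ℝ³`. -/
def pd (i : Fin 3) (f : E3 → ℝ) (x : E3) : ℝ :=
  fderiv ℝ f x (EuclideanSpace.single i 1)

/-- The curl `∇×v` of a vector field on `ℝ³`. -/
def curl (v : E3 → E3) (x : E3) : E3 :=
  toE3 ![pd 1 (fun y => v y 2) x - pd 2 (fun y => v y 1) x,
        pd 2 (fun y => v y 0) x - pd 0 (fun y => v y 2) x,
        pd 0 (fun y => v y 1) x - pd 1 (fun y => v y 0) x]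

/-- The divergence of a vector field on `ℝ³`. -/
def div3 (v : E3 → E3) (x : E3) : ℝ :=
  pd 0 (fun y => v y 0) x + pd 1 (fun y => v y 1) x + pd 2 (fun y => v y 2) x

/-- The cross product on `ℝ³`. -/
def cross3 (a b : E3) : E3 :=
  toE3 (crossProduct (WithLp.equiv 2 (Fin 3 → ℝ) a) (WithLp.equiv 2 (Fin 3 → ℝ) b))

/-- Squared Frobenius norm `|∇v|²` of the Jacobian of a vector field. -/
def jacNormSq (v : E3 → E3) (x : E3) : ℝ :=
  ∑ i : Fin 3, ∑ j : Fin 3, (pd i (fun y => v y j) x) ^ 2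

/-- The Loss–Yau field `u(x) = 3(1+|x|²)⁻²((1-|x|²)w + 2(w·x)x + 2 w×x)`. -/
def uLY (w : E3) (x : E3) : E3 :=
  (3 * ((1 + ‖x‖ ^ 2) ^ 2)⁻¹) •
    ((1 - ‖x‖ ^ 2) • w + (2 * ip w x) • x + (2 : ℝ) • cross3 w x)

/-!
The field `u = uLY w` is a Beltrami field: writing `u = f • A` with `f y = 3 (1 + |y|²)⁻²` and
`A y = (1 - |y|²) w + 2 (w·y) y + 2 w × y`, the product rule `∇×(f A) = f ∇×A + ∇f × A` together
with `∇×A = 4 (w + w × y)` gives `∇×u = 4 (1 + |y|²)⁻¹ u`. On the other hand `|A y| = (1 + |y|²) |w|`,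
so `|u| = 3 |w| (1 + |y|²)⁻¹`, which for `|w| = 4/3` is the same factor. Hence `∇×u = |u| u`;
then `|∇×u| = |u|²`, so `|∇×u|^{-1/2} ∇×u = u` and the left-hand side is `∇×u = |u| u` again.
-/

open InnerProductSpace

section Gradient

variable {F : Type*} [NormedAddCommGroup F] [InnerProductSpace ℝ F] [CompleteSpace F]

lemma HasDerivAt.hasGradientAt_comp_norm_sq {φ : ℝ → ℝ} {φ' : ℝ} {x : F}
    (hφ : HasDerivAt φ φ' (‖x‖ ^ 2)) :
    HasGradientAt (fun y => φ (‖y‖ ^ 2)) ((2 * φ') • x) x := by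
  rw [hasGradientAt_iff_hasFDerivAt]
  refine (hφ.comp_hasFDerivAt x (hasStrictFDerivAt_norm_sq x).hasFDerivAt).congr_fderiv ?_
  ext y
  simp only [smul_apply, coe_innerSL_apply, nsmul_eq_mul, Nat.cast_ofNat, smul_eq_mul, map_smul,
    toDual_apply_apply]
  ring

lemma hasGradientAt_one_sub_norm_sq (x : F) :
    HasGradientAt (fun y => 1 - ‖y‖ ^ 2) ((-2 : ℝ) • x) x := by
  simpa using ((hasDerivAt_id' (‖x‖ ^ 2)).const_sub 1).hasGradientAt_comp_norm_sq

lemma hasGradientAt_const_mul_inner (c : ℝ) (w x : F) :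
    HasGradientAt (fun y => c * ⟪w, y⟫_ℝ) (c • w) x := by
  rw [hasGradientAt_iff_hasFDerivAt]
  refine (((innerSL ℝ w).hasFDerivAt (x := x)).const_mul c).congr_fderiv ?_
  ext y
  simp

end Gradient

lemma rpow_neg_half_norm_smul_self {E : Type*} [NormedAddCommGroup E] [NormedSpace ℝ E] {v : E}
    (hv : v ≠ 0) : ‖‖v‖ • v‖ ^ (-(1 / 2) : ℝ) • ‖v‖ • v = v := by
  have hpos : 0 < ‖v‖ := norm_pos_iff.2 hv
  rw [norm_smul, norm_norm, ← sq, ← Real.rpow_natCast, ← Real.rpow_mul hpos.le, smul_smul]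
  norm_num [Real.rpow_neg_one, inv_mul_cancel₀ hpos.ne']

lemma toE3_apply (f : Fin 3 → ℝ) (i : Fin 3) : toE3 f i = f i := rfl

lemma norm_sq_eq_coord (x : E3) : ‖x‖ ^ 2 = x 0 ^ 2 + x 1 ^ 2 + x 2 ^ 2 := by
  simp [EuclideanSpace.norm_sq_eq, Fin.sum_univ_three]

lemma ip_eq_coord (a b : E3) : ip a b = a 0 * b 0 + a 1 * b 1 + a 2 * b 2 := by
  simp only [ip, PiLp.inner_apply, RCLike.inner_apply, ringHom_apply, Fin.sum_univ_three]
  ring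

lemma cross3_eq (a b : E3) :
    cross3 a b = toE3 ![a 1 * b 2 - a 2 * b 1, a 2 * b 0 - a 0 * b 2, a 0 * b 1 - a 1 * b 0] := by
  simp only [cross3, cross_apply]
  rfl

def cross3CLM (w : E3) : E3 →L[ℝ] E3 :=
  LinearMap.toContinuousLinearMap
    { toFun := cross3 w
      map_add' := fun a b => by simp [cross3, toE3]
      map_smul' := fun c a => by simp [cross3, toE3] }

@[simp]
lemma coe_cross3CLM (w : E3) : ⇑(cross3CLM w) = cross3 w := rfl

lemma differentiable_cross3 (w : E3) : Differentiable ℝ (cross3 w) :=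
  (cross3CLM w).differentiable

lemma pd_eq_gradient_apply (i : Fin 3) (f : E3 → ℝ) (x : E3) : pd i f x = gradient f x i := by
  rw [pd, ← inner_gradient_left, EuclideanSpace.inner_single_right]
  simp

section Curl

variable {f g : E3 → ℝ} {V W : E3 → E3} {x : E3}

lemma pd_add (hf : DifferentiableAt ℝ f x) (hg : DifferentiableAt ℝ g x) (i : Fin 3) :
    pd i (fun y => f y + g y) x = pd i f x + pd i g x := by
  simp only [pd, fderiv_fun_add hf hg]
  rfl

lemma pd_mul (hf : DifferentiableAt ℝ f x) (hg : DifferentiableAt ℝ g x) (i : Fin 3) :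
    pd i (fun y => f y * g y) x = pd i f x * g x + f x * pd i g x := by
  simp only [pd, fderiv_fun_mul hf hg, add_apply, smul_apply, smul_eq_mul]
  ring

lemma pd_apply_of_hasFDerivAt {L : E3 →L[ℝ] E3} (h : HasFDerivAt V L x) (i j : Fin 3) :
    pd i (fun y => V y j) x = L (EuclideanSpace.single i 1) j := by
  change fderiv ℝ (EuclideanSpace.proj j ∘ V) x _ = _
  rw [((EuclideanSpace.proj j : E3 →L[ℝ] ℝ).hasFDerivAt.comp x h).fderiv]
  rfl

lemma curl_eq_of_hasFDerivAt {L : E3 →L[ℝ] E3} (h : HasFDerivAt V L x) :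
    curl V x = toE3 ![L (EuclideanSpace.single 1 1) 2 - L (EuclideanSpace.single 2 1) 1,
      L (EuclideanSpace.single 2 1) 0 - L (EuclideanSpace.single 0 1) 2,
      L (EuclideanSpace.single 0 1) 1 - L (EuclideanSpace.single 1 1) 0] := by
  simp only [curl, pd_apply_of_hasFDerivAt h]

lemma curl_add (hV : DifferentiableAt ℝ V x) (hW : DifferentiableAt ℝ W x) :
    curl (fun y => V y + W y) x = curl V x + curl W x := by
  have hV' := differentiableAt_euclidean.1 hV
  have hW' := differentiableAt_euclidean.1 hW
  ext k
  fin_cases k <;> simp [curl, toE3_apply, pd_add (hV' _) (hW' _)] <;> ring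

lemma curl_smul (hf : DifferentiableAt ℝ f x) (hV : DifferentiableAt ℝ V x) :
    curl (fun y => f y • V y) x = f x • curl V x + cross3 (gradient f x) (V x) := by
  have hV' := differentiableAt_euclidean.1 hV
  ext k
  fin_cases k <;> simp [curl, cross3_eq, toE3_apply, pd_mul hf (hV' _), pd_eq_gradient_apply] <;>
    ring

lemma curl_const (a : E3) : curl (fun _ => a) x = 0 := by
  rw [curl_eq_of_hasFDerivAt (hasFDerivAt_const a x)]
  ext k
  fin_cases k <;> simp [toE3_apply]

lemma curl_id : curl (fun y => y) x = 0 := by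
  rw [curl_eq_of_hasFDerivAt (V := fun y => y) (hasFDerivAt_id x)]
  ext k
  fin_cases k <;> simp [toE3_apply]

lemma curl_cross3 (w : E3) : curl (cross3 w) x = (2 : ℝ) • w := by
  rw [curl_eq_of_hasFDerivAt (V := cross3 w) (cross3CLM w).hasFDerivAt]
  ext k
  fin_cases k <;> simp [cross3_eq, toE3_apply] <;> ring

end Curl

def uLYNumerator (w y : E3) : E3 :=
  (1 - ‖y‖ ^ 2) • w + (2 * ip w y) • y + (2 : ℝ) • cross3 w y

lemma uLY_eq_smul_uLYNumerator (w : E3) :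
    uLY w = fun y => (3 * ((1 + ‖y‖ ^ 2) ^ 2)⁻¹) • uLYNumerator w y :=
  rfl

lemma differentiableAt_uLYNumerator (w x : E3) : DifferentiableAt ℝ (uLYNumerator w) x :=
  (((hasGradientAt_one_sub_norm_sq x).differentiableAt.smul_const w).add
    ((hasGradientAt_const_mul_inner 2 w x).differentiableAt.smul differentiableAt_id)).add
    ((differentiable_cross3 w x).const_smul (2 : ℝ))

lemma curl_uLYNumerator (w x : E3) : curl (uLYNumerator w) x = (4 : ℝ) • (w + cross3 w x) := by
  have g1 := hasGradientAt_one_sub_norm_sq x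
  have g2 : HasGradientAt (fun y => 2 * ip w y) ((2 : ℝ) • w) x :=
    hasGradientAt_const_mul_inner 2 w x
  have h1 : DifferentiableAt ℝ (fun y : E3 => (1 - ‖y‖ ^ 2) • w) x :=
    g1.differentiableAt.smul_const w
  have h2 : DifferentiableAt ℝ (fun y : E3 => (2 * ip w y) • y) x :=
    g2.differentiableAt.smul differentiableAt_fun_id
  have h3 : DifferentiableAt ℝ (fun y : E3 => (2 : ℝ) • cross3 w y) x :=
    (differentiable_cross3 w x).const_smul (2 : ℝ)
  rw [show uLYNumerator w = fun y => ((1 - ‖y‖ ^ 2) • w + (2 * ip w y) • y) + (2 : ℝ) • cross3 w y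
    from rfl, curl_add (h1.fun_add h2) h3, curl_add h1 h2, curl_smul g1.differentiableAt
    (differentiableAt_const w), curl_smul g2.differentiableAt differentiableAt_fun_id,
    curl_smul (differentiableAt_const 2) (differentiable_cross3 w x), g1.gradient, g2.gradient,
    gradient_fun_const, curl_const, curl_id, curl_cross3]
  ext k
  fin_cases k <;> simp [cross3_eq, toE3_apply] <;> ring

lemma curl_uLY (w x : E3) : curl (uLY w) x = (4 / (1 + ‖x‖ ^ 2)) • uLY w x := by
  have hφ : HasDerivAt (fun t : ℝ => 3 * ((1 + t) ^ 2)⁻¹) _ (‖x‖ ^ 2) :=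
    ((((hasDerivAt_id' _).const_add 1).pow 2).inv
      (by positivity : (1 + ‖x‖ ^ 2) ^ 2 ≠ 0)).const_mul 3
  have hf := hφ.hasGradientAt_comp_norm_sq
  rw [uLY_eq_smul_uLYNumerator, curl_smul hf.differentiableAt (differentiableAt_uLYNumerator w x),
    hf.gradient, curl_uLYNumerator]
  have hx : 1 + (x 0 ^ 2 + x 1 ^ 2 + x 2 ^ 2) ≠ 0 := by positivity
  -- what remains is `x × (w × x) = |x|² w - (x·w) x`, checked in coordinates
  ext k
  fin_cases k <;> simp [uLYNumerator, cross3_eq, toE3_apply, norm_sq_eq_coord, ip_eq_coord] <;>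
    field_simp <;> ring

lemma norm_uLYNumerator (w x : E3) : ‖uLYNumerator w x‖ = (1 + ‖x‖ ^ 2) * ‖w‖ := by
  refine (sq_eq_sq₀ (norm_nonneg _) (by positivity)).1 ?_
  simp only [uLYNumerator, norm_sq_eq_coord, ip_eq_coord, cross3_eq, PiLp.add_apply,
    PiLp.smul_apply, smul_eq_mul, toE3_apply, Matrix.cons_val_zero, Matrix.cons_val_one,
    Matrix.cons_val, mul_pow]
  ring

lemma norm_uLY (w x : E3) : ‖uLY w x‖ = 3 * ‖w‖ / (1 + ‖x‖ ^ 2) := by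
  rw [uLY_eq_smul_uLYNumerator, norm_smul, norm_uLYNumerator, Real.norm_of_nonneg (by positivity)]
  field_simp

/-- For `|w| = 4/3` the Loss–Yau field solves the critical `3/2`-curl-curl equation
`∇×(|∇×u|^{-1/2} ∇×u) = |u| u` on `ℝ³`. -/
theorem uLY_solves_critical (w : E3) (hw : ‖w‖ = 4 / 3) (x : E3) :
    curl (fun y => ‖curl (uLY w) y‖ ^ (-(1 / 2) : ℝ) • curl (uLY w) y) x =
      ‖uLY w x‖ • uLY w x := by
  have hnorm (y : E3) : ‖uLY w y‖ = 4 / (1 + ‖y‖ ^ 2) := by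
    rw [norm_uLY, hw]
    ring
  have hcurl (y : E3) : curl (uLY w) y = ‖uLY w y‖ • uLY w y := by
    rw [curl_uLY, hnorm]
  have hfield : (fun y => ‖curl (uLY w) y‖ ^ (-(1 / 2) : ℝ) • curl (uLY w) y) = uLY w := by
    funext y
    have hy : uLY w y ≠ 0 := norm_pos_iff.1 (by rw [hnorm]; positivity)
    rw [hcurl, rpow_neg_half_norm_smul_self hy]
  rw [hfield, hcurl]
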